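/- arXiv:2306.16985 — 4 statements merged into one kernel-verified Lean document; each statement's English description precedes it below -/
import Mathlib

section
/- In K^MW_*(F), for all units a, b ∈ F^×, one has [a][b] = ε[b][a], where ε := -⟨-1⟩; consequently the graded ring K^MW_*(F) is ε-graded-commutative. -/
noncomputable section

/-- Generators of the Milnor–Witt K-theory ring: a symbol `[u]` for each unit `u`
and the element `η`. -/
inductive MWGen (F : Type) [Field F] : Type
  | of : Fˣ → MWGen F
  | eta : MWGen F

/-- The defining relations KMW1–KMW4 of Milnor–Witt K-theory, imposed on the free
(noncommutative) ℤ-algebra on the generators. -/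
inductive MWRel (F : Type) [Field F] :
    FreeAlgebra ℤ (MWGen F) → FreeAlgebra ℤ (MWGen F) → Prop
  | steinberg (a : Fˣ) (h1 : (a : F) ≠ 1) :
      MWRel F
        (FreeAlgebra.ι ℤ (MWGen.of a) *
          FreeAlgebra.ι ℤ (MWGen.of (Units.mk0 (1 - (a : F)) (sub_ne_zero_of_ne h1.symm))))
        0
  | mul_rel (a b : Fˣ) :
      MWRel F (FreeAlgebra.ι ℤ (MWGen.of (a * b)))
        (FreeAlgebra.ι ℤ (MWGen.of a) + FreeAlgebra.ι ℤ (MWGen.of b) +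
          FreeAlgebra.ι ℤ MWGen.eta * FreeAlgebra.ι ℤ (MWGen.of a) *
            FreeAlgebra.ι ℤ (MWGen.of b))
  | comm_rel (u : Fˣ) :
      MWRel F (FreeAlgebra.ι ℤ MWGen.eta * FreeAlgebra.ι ℤ (MWGen.of u))
        (FreeAlgebra.ι ℤ (MWGen.of u) * FreeAlgebra.ι ℤ MWGen.eta)
  | hyp :
      MWRel F
        (FreeAlgebra.ι ℤ MWGen.eta *
          (FreeAlgebra.ι ℤ MWGen.eta * FreeAlgebra.ι ℤ (MWGen.of (-1)) + 2))
        0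

/-- The Milnor–Witt K-theory ring `K^MW_*(F)` (all degrees together). -/
def KMW (F : Type) [Field F] : Type := RingQuot (MWRel F)

instance (F : Type) [Field F] : Ring (KMW F) := inferInstanceAs (Ring (RingQuot (MWRel F)))

/-- The symbol `[u] ∈ K^MW_1(F)`. -/
def mw {F : Type} [Field F] (u : Fˣ) : KMW F :=
  RingQuot.mkRingHom (MWRel F) (FreeAlgebra.ι ℤ (MWGen.of u))

/-- The element `η ∈ K^MW_{-1}(F)`. -/
def mweta (F : Type) [Field F] : KMW F :=
  RingQuot.mkRingHom (MWRel F) (FreeAlgebra.ι ℤ MWGen.eta)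

/-- The degree-`n` homogeneous component of `K^MW_*(F)`: the additive subgroup spanned
by the monomials `η^m [u₁]⋯[u_r]` with `r - m = n`. -/
def KMWcomp (F : Type) [Field F] (n : ℤ) : AddSubgroup (KMW F) :=
  AddSubgroup.closure {x | ∃ (m r : ℕ) (v : Fin r → Fˣ),
    (r : ℤ) - (m : ℤ) = n ∧ x = (mweta F) ^ m * (List.ofFn fun i => mw (v i)).prod}

namespace MWaux

variable {F : Type} [Field F]

lemma rel_eq {x y : FreeAlgebra ℤ (MWGen F)} (h : MWRel F x y) :
    RingQuot.mkRingHom (MWRel F) x = RingQuot.mkRingHom (MWRel F) y :=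
  RingQuot.mkRingHom_rel h

lemma mul_rel (a b : Fˣ) : mw (a * b) = mw a + mw b + mweta F * mw a * mw b := by
  have := rel_eq (MWRel.mul_rel (F := F) a b)
  simp only [map_add, map_mul] at this
  exact this

lemma comm_rel (u : Fˣ) : mweta F * mw u = mw u * mweta F := by
  have := rel_eq (MWRel.comm_rel (F := F) u)
  simp only [map_mul] at this
  exact this

lemma hyp_rel : mweta F * (mweta F * mw (-1 : Fˣ) + 2) = (0 : KMW F) := by
  have := rel_eq (MWRel.hyp (F := F))
  simp only [map_mul, map_add, map_ofNat, map_zero] at this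
  exact this

lemma steinberg {a : Fˣ} (h : (a : F) ≠ 1) (b : Fˣ) (hb : (b : F) = 1 - (a : F)) :
    mw a * mw b = 0 := by
  have h2 := rel_eq (MWRel.steinberg (F := F) a h)
  have hb' : b = Units.mk0 (1 - (a : F)) (sub_ne_zero_of_ne h.symm) := Units.ext (by simpa using hb)
  rw [hb']
  simp only [map_mul, map_zero] at h2
  exact h2


lemma central_of {c : KMW F} (h1 : ∀ u : Fˣ, c * mw u = mw u * c)
    (h2 : c * mweta F = mweta F * c) (x : KMW F) : c * x = x * c := by
  obtain ⟨z, rfl⟩ := RingQuot.mkRingHom_surjective (MWRel F) x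
  induction z using FreeAlgebra.induction with
  | grade0 r =>
      have h3 : (RingQuot.mkRingHom (MWRel F)) (algebraMap ℤ (FreeAlgebra ℤ (MWGen F)) r)
          = ((r : ℤ) : KMW F) := by
        rw [eq_intCast (algebraMap ℤ (FreeAlgebra ℤ (MWGen F))) r]
        exact map_intCast _ r
      rw [h3, Int.cast_comm]
  | grade1 g =>
      cases g with
      | of u => exact h1 u
      | eta => exact h2
  | mul a b ha hb =>
      have e : (RingQuot.mkRingHom (MWRel F) (a * b) : KMW F)
          = (RingQuot.mkRingHom (MWRel F) a : KMW F) * (RingQuot.mkRingHom (MWRel F) b : KMW F) :=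
        map_mul _ a b
      have key : ∀ A B : KMW F, c * A = A * c → c * B = B * c → c * (A * B) = A * B * c := by
        intro A B ha hb
        rw [← mul_assoc, ha, mul_assoc, hb, mul_assoc]
      rw [e]
      exact key _ _ ha hb
  | add a b ha hb =>
      have e : (RingQuot.mkRingHom (MWRel F) (a + b) : KMW F)
          = (RingQuot.mkRingHom (MWRel F) a : KMW F) + (RingQuot.mkRingHom (MWRel F) b : KMW F) :=
        map_add _ a b
      have key : ∀ A B : KMW F, c * A = A * c → c * B = B * c → c * (A + B) = (A + B) * c := by
        intro A B ha hb
        rw [mul_add, add_mul, ha, hb]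
      rw [e]
      exact key _ _ ha hb

lemma eta_central (x : KMW F) : mweta F * x = x * mweta F :=
  central_of comm_rel rfl x

lemma eta_swap (a b : Fˣ) :
    mweta F * (mw a * mw b) = mweta F * (mw b * mw a) := by
  have h1 := mul_rel a b
  have h2 := mul_rel b a
  rw [mul_comm b a, add_comm (mw b) (mw a)] at h2
  have h3 := add_left_cancel (h1.symm.trans h2)
  rw [mul_assoc, mul_assoc] at h3
  exact h3

/-- `⟨a⟩ = 1 + η[a]`. -/
def gA (a : Fˣ) : KMW F := 1 + mweta F * mw a

lemma gA_comm_mw (a b : Fˣ) : gA a * mw b = mw b * gA a := by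
  unfold gA
  rw [add_mul, one_mul, mul_add, mul_one, mul_assoc, eta_swap, ← mul_assoc,
    comm_rel, mul_assoc]

lemma gA_central (a : Fˣ) (x : KMW F) : gA a * x = x * gA a := by
  refine central_of (gA_comm_mw a) ?_ x
  unfold gA
  rw [add_mul, one_mul, mul_add, mul_one, mul_assoc, ← eta_central]


lemma eta_eta_neg1 : mweta F * mweta F * mw (-1 : Fˣ) = -(2 * mweta F) := by
  have h := hyp_rel (F := F)
  rw [mul_add] at h
  have : mweta F * 2 = 2 * mweta F := by rw [mul_two, two_mul]
  rw [this, ← mul_assoc] at h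
  exact eq_neg_of_add_eq_zero_left h

lemma neg_one_mul_neg (a : Fˣ) : (-1 : Fˣ) * (-a) = a := by
  rw [neg_mul_neg, one_mul]

lemma eta_mw_one : mweta F * mw (1 : Fˣ) = 0 := by
  have h1 : mw (1 : Fˣ) = mw (-1 : Fˣ) + mw (-1 : Fˣ)
      + mweta F * mw (-1 : Fˣ) * mw (-1 : Fˣ) := by
    have := mul_rel (-1 : Fˣ) (-1 : Fˣ)
    rwa [neg_one_mul_neg] at this
  rw [h1, mul_add, mul_add, ← mul_assoc, ← mul_assoc, eta_eta_neg1, neg_mul, mul_assoc, two_mul]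
  abel

lemma mw_one : mw (1 : Fˣ) = 0 := by
  have h1 := mul_rel (1 : Fˣ) (1 : Fˣ)
  rw [one_mul] at h1
  rw [add_assoc] at h1
  have h2 := left_eq_add.mp h1
  rwa [eta_mw_one, zero_mul, add_zero] at h2


lemma mul_rel' (a b : Fˣ) : mw (a * b) = mw a + gA a * mw b := by
  rw [mul_rel, gA, add_mul, one_mul, add_assoc, mul_assoc]

lemma gA_mul (a b : Fˣ) : gA a * gA b = gA (a * b) := by
  have h : mweta F * mw a * (mweta F * mw b)
      = mweta F * (mweta F * mw a * mw b) := by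
    rw [mul_assoc (mweta F) (mw a) (mweta F * mw b), ← mul_assoc (mw a), ← comm_rel]
  unfold gA
  rw [mul_rel]
  simp only [add_mul, mul_add, one_mul, mul_one]
  rw [h]
  abel

lemma gA_one : gA (1 : Fˣ) = 1 := by
  rw [gA, mw_one, mul_zero, add_zero]

lemma mw_inv (a : Fˣ) : mw a⁻¹ = -(gA a⁻¹ * mw a) := by
  have h0 : mw a + gA a * mw a⁻¹ = 0 := by
    have := mul_rel' a a⁻¹
    rwa [mul_inv_cancel, mw_one, eq_comm] at this
  have h1 := congrArg (fun z => gA a⁻¹ * z) h0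
  simp only [mul_add, mul_zero] at h1
  rw [← mul_assoc, gA_mul, inv_mul_cancel, gA_one, one_mul] at h1
  exact eq_neg_of_add_eq_zero_right h1


lemma mw_mul_neg_self (a : Fˣ) : mw a * mw (-a) = 0 := by
  by_cases h : (a : F) = 1
  · have ha : a = 1 := Units.ext (by simpa using h)
    subst ha
    rw [mw_one, zero_mul]
  · have hai : ((a⁻¹ : Fˣ) : F) ≠ 1 := by
      rw [Units.val_inv_eq_inv_val]
      exact fun hh => h (by rwa [inv_eq_one] at hh)
    have hs : (1 : F) - (a : F) ≠ 0 := sub_ne_zero_of_ne (Ne.symm h)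
    have ht : (1 : F) - ((a⁻¹ : Fˣ) : F) ≠ 0 := sub_ne_zero_of_ne (Ne.symm hai)
    set s : Fˣ := Units.mk0 _ hs with hs_def
    set t : Fˣ := Units.mk0 _ ht with ht_def
    have key : (-a : Fˣ) = s * t⁻¹ := by
      apply Units.ext
      rw [Units.val_mul, Units.val_inv_eq_inv_val, Units.val_neg]
      show -(a : F) = (1 - (a : F)) * (1 - ((a⁻¹ : Fˣ) : F))⁻¹
      rw [Units.val_inv_eq_inv_val]
      have ha0 : (a : F) ≠ 0 := Units.ne_zero a
      have ht' : 1 - ((a : F))⁻¹ ≠ 0 := by rwa [Units.val_inv_eq_inv_val] at ht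
      rw [← div_eq_mul_inv, eq_div_iff ht']
      field_simp
      ring
    have h1 : mw a * mw s = 0 := steinberg h s rfl
    have h2 : mw a⁻¹ * mw t = 0 := steinberg hai t rfl
    have h3 : mw a * mw t = 0 := by
      have hma : mw a = -(gA a * mw a⁻¹) := by
        have := mw_inv a⁻¹
        rwa [inv_inv] at this
      rw [hma, neg_mul, mul_assoc, h2, mul_zero, neg_zero]
    rw [key, mul_rel', mw_inv t, mul_add, h1, zero_add, mul_neg, mul_neg, neg_eq_zero,
      ← mul_assoc (gA s), gA_mul, ← mul_assoc, ← gA_central, mul_assoc, h3, mul_zero]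


lemma mw_expand_neg (a : Fˣ) : mw a = mw (-1 : Fˣ) + gA (-1 : Fˣ) * mw (-a) := by
  have := mul_rel' (-1 : Fˣ) (-a)
  rwa [neg_one_mul_neg] at this

lemma mw_sq_right (a : Fˣ) : mw a * mw a = mw a * mw (-1 : Fˣ) := by
  nth_rewrite 2 [mw_expand_neg a]
  rw [mul_add, ← mul_assoc, ← gA_central, mul_assoc, mw_mul_neg_self, mul_zero, add_zero]

lemma mw_sq_left (a : Fˣ) : mw a * mw a = mw (-1 : Fˣ) * mw a := by
  nth_rewrite 1 [mw_expand_neg a]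
  have hz : mw (-a) * mw a = 0 := by
    have := mw_mul_neg_self (-a)
    rwa [neg_neg] at this
  rw [add_mul, mul_assoc, hz, mul_zero, add_zero]

lemma mw_neg_one_comm (a : Fˣ) : mw a * mw (-1 : Fˣ) = mw (-1 : Fˣ) * mw a :=
  (mw_sq_right a).symm.trans (mw_sq_left a)

lemma key13 (a : Fˣ) :
    mweta F * (mweta F * (mw a * mw (-1 : Fˣ))) = -(2 * (mweta F * mw a)) := by
  rw [eta_swap a (-1 : Fˣ), ← mul_assoc (mweta F) (mw (-1 : Fˣ)) (mw a),
    ← mul_assoc, ← mul_assoc, eta_eta_neg1, neg_mul, mul_assoc]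

lemma gA_sq (a : Fˣ) : gA a * gA a = 1 := by
  rw [gA_mul, gA, mul_rel, mul_add, mul_add, mul_assoc (mweta F) (mw a) (mw a),
    mw_sq_right, key13, two_mul]
  abel

lemma step8 (a : Fˣ) : mweta F * (gA a * mw a) = -(mweta F * mw a) := by
  rw [gA, add_mul, one_mul, mul_add, mul_assoc (mweta F) (mw a) (mw a),
    mw_sq_right, key13, two_mul]
  abel


lemma main16 (a b : Fˣ) :
    gA a * (mw a * mw b + mw b * mw a) = mweta F * (mw a * (mw b * mw (-1 : Fˣ))) := by
  have e3 : (gA a * mw b) * (gA a * mw b) = mw b * mw (-1 : Fˣ) := by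
    calc (gA a * mw b) * (gA a * mw b) = gA a * (mw b * (gA a * mw b)) := by rw [mul_assoc]
      _ = gA a * (gA a * (mw b * mw b)) := by
          rw [← mul_assoc (mw b) (gA a) (mw b), ← gA_central, mul_assoc]
      _ = (gA a * gA a) * (mw b * mw b) := by rw [← mul_assoc]
      _ = mw b * mw (-1 : Fˣ) := by rw [gA_sq, one_mul, mw_sq_right]
  have e4 : mw a * (gA a * mw b) = gA a * (mw a * mw b) := by
    rw [← mul_assoc, ← gA_central, mul_assoc]
  have H := mw_sq_right (a * b)
  rw [mul_rel' a b, add_mul, mul_add, mul_add, mw_sq_right a, e4,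
    mul_assoc (gA a) (mw b) (mw a), e3,
    add_mul (mw a) (gA a * mw b) (mw (-1 : Fˣ)), mul_assoc (gA a) (mw b) (mw (-1 : Fˣ))] at H
  rw [show mw a * mw (-1 : Fˣ) + gA a * (mw a * mw b) + (gA a * (mw b * mw a) + mw b * mw (-1 : Fˣ))
      = mw a * mw (-1 : Fˣ) + (gA a * (mw a * mw b) + gA a * (mw b * mw a) + mw b * mw (-1 : Fˣ))
    from by abel] at H
  have h6 := add_left_cancel H
  rw [eq_sub_iff_add_eq.symm] at h6
  rw [mul_add (gA a), h6]
  calc gA a * (mw b * mw (-1 : Fˣ)) - mw b * mw (-1 : Fˣ)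
      = (gA a - 1) * (mw b * mw (-1 : Fˣ)) := by rw [sub_mul, one_mul]
    _ = (mweta F * mw a) * (mw b * mw (-1 : Fˣ)) := by rw [gA, add_sub_cancel_left]
    _ = mweta F * (mw a * (mw b * mw (-1 : Fˣ))) := by rw [mul_assoc]

lemma part1 (a b : Fˣ) :
    mw a * mw b = -(1 + mweta F * mw (-1 : Fˣ)) * (mw b * mw a) := by
  have H := congrArg (fun z => gA a * z) (main16 a b)
  rw [← mul_assoc, gA_sq, one_mul] at H
  rw [← mul_assoc (gA a) (mweta F) _, gA_central a (mweta F), mul_assoc,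
    ← mul_assoc (gA a) (mw a) _, ← mul_assoc (mweta F) (gA a * mw a) _, step8,
    neg_mul, mul_assoc] at H
  have h7 : mweta F * (mw a * (mw b * mw (-1 : Fˣ)))
      = (mweta F * mw (-1 : Fˣ)) * (mw b * mw a) := by
    calc mweta F * (mw a * (mw b * mw (-1 : Fˣ)))
        = mweta F * (mw a * (mw (-1 : Fˣ) * mw b)) := by rw [mw_neg_one_comm b]
      _ = mweta F * ((mw a * mw (-1 : Fˣ)) * mw b) := by rw [← mul_assoc (mw a)]
      _ = mweta F * ((mw (-1 : Fˣ) * mw a) * mw b) := by rw [mw_neg_one_comm a]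
      _ = mweta F * (mw (-1 : Fˣ) * (mw a * mw b)) := by rw [mul_assoc]
      _ = (mweta F * mw (-1 : Fˣ)) * (mw a * mw b) := by rw [← mul_assoc]
      _ = mw (-1 : Fˣ) * (mweta F * (mw a * mw b)) := by rw [comm_rel, mul_assoc]
      _ = mw (-1 : Fˣ) * (mweta F * (mw b * mw a)) := by rw [eta_swap a b]
      _ = (mweta F * mw (-1 : Fˣ)) * (mw b * mw a) := by rw [← mul_assoc, ← comm_rel]
  rw [h7] at H
  rw [neg_mul, add_mul, one_mul, eq_sub_of_add_eq H]
  abel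


/-- `ε = -⟨-1⟩`. -/
def eps (F : Type) [Field F] : KMW F := -(1 + mweta F * mw (-1 : Fˣ))

lemma eps_def : eps F = -(1 + mweta F * mw (-1 : Fˣ)) := rfl

lemma eps_eq : eps F = -(gA (-1 : Fˣ)) := rfl

lemma eps_central (x : KMW F) : eps F * x = x * eps F := by
  rw [eps_eq, neg_mul, mul_neg, gA_central]

lemma eps_sq : eps F * eps F = 1 := by
  rw [eps_eq, neg_mul_neg, gA_sq]

lemma eps_pow_central (k : ℕ) (x : KMW F) : eps F ^ k * x = x * eps F ^ k := by
  induction k with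
  | zero => rw [pow_zero, one_mul, mul_one]
  | succ j ih => rw [pow_succ, mul_assoc, eps_central, ← mul_assoc, ih, mul_assoc, ← pow_succ]

lemma eps_mul_eta : eps F * mweta F = mweta F := by
  rw [eps_def, neg_mul, add_mul, one_mul, mul_assoc, ← comm_rel, ← mul_assoc,
    eta_eta_neg1, two_mul]
  abel

lemma eps_eta_absorb (z : KMW F) : eps F * (mweta F * z) = mweta F * z := by
  rw [← mul_assoc, eps_mul_eta]

lemma eps_pow_eta_absorb (k : ℕ) (z : KMW F) :
    eps F ^ k * (mweta F * z) = mweta F * z := by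
  induction k with
  | zero => rw [pow_zero, one_mul]
  | succ j ih => rw [pow_succ', mul_assoc, ih, eps_eta_absorb]

lemma eta_pow_central (k : ℕ) (x : KMW F) : mweta F ^ k * x = x * mweta F ^ k := by
  induction k with
  | zero => rw [pow_zero, one_mul, mul_one]
  | succ j ih => rw [pow_succ, mul_assoc, eta_central, ← mul_assoc, ih, mul_assoc, ← pow_succ]

/-- Product of symbols. -/
def prodmw (l : List Fˣ) : KMW F := (l.map mw).prod

lemma prodmw_nil : prodmw ([] : List Fˣ) = 1 := rfl

lemma prodmw_cons (u : Fˣ) (l : List Fˣ) : prodmw (u :: l) = mw u * prodmw l := by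
  rw [prodmw, List.map_cons, List.prod_cons, prodmw]

lemma comm_mw_prod (u : Fˣ) (l : List Fˣ) :
    mw u * prodmw l = eps F ^ l.length * (prodmw l * mw u) := by
  induction l with
  | nil => simp [prodmw_nil]
  | cons v l ih =>
      rw [prodmw_cons, List.length_cons]
      calc mw u * (mw v * prodmw l) = (mw u * mw v) * prodmw l := by rw [mul_assoc]
        _ = (eps F * (mw v * mw u)) * prodmw l := by rw [part1 u v, ← eps_def]
        _ = eps F * (mw v * (mw u * prodmw l)) := by rw [mul_assoc, mul_assoc]
        _ = eps F * (mw v * (eps F ^ l.length * (prodmw l * mw u))) := by rw [ih]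
        _ = eps F * (eps F ^ l.length * (mw v * (prodmw l * mw u))) := by
            rw [← mul_assoc (mw v), ← eps_pow_central, mul_assoc]
        _ = (eps F * eps F ^ l.length) * ((mw v * prodmw l) * mw u) := by
            rw [← mul_assoc (mw v), ← mul_assoc]
        _ = eps F ^ (l.length + 1) * ((mw v * prodmw l) * mw u) := by rw [← pow_succ']

lemma comm_prod_prod (l l' : List Fˣ) :
    prodmw l * prodmw l' = eps F ^ (l.length * l'.length) * (prodmw l' * prodmw l) := by
  induction l with
  | nil => simp [prodmw_nil]
  | cons u l ih =>
      rw [prodmw_cons, List.length_cons]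
      calc (mw u * prodmw l) * prodmw l' = mw u * (prodmw l * prodmw l') := by rw [mul_assoc]
        _ = mw u * (eps F ^ (l.length * l'.length) * (prodmw l' * prodmw l)) := by rw [ih]
        _ = eps F ^ (l.length * l'.length) * (mw u * (prodmw l' * prodmw l)) := by
            rw [← mul_assoc, ← eps_pow_central, mul_assoc]
        _ = eps F ^ (l.length * l'.length) * ((mw u * prodmw l') * prodmw l) := by
            rw [← mul_assoc (mw u)]
        _ = eps F ^ (l.length * l'.length) *
              ((eps F ^ l'.length * (prodmw l' * mw u)) * prodmw l) := by
            rw [comm_mw_prod]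
        _ = (eps F ^ (l.length * l'.length) * eps F ^ l'.length) *
              (prodmw l' * (mw u * prodmw l)) := by
            rw [mul_assoc (eps F ^ l'.length), mul_assoc (prodmw l'),
              ← mul_assoc (eps F ^ (l.length * l'.length))]
        _ = eps F ^ ((l.length + 1) * l'.length) * (prodmw l' * (mw u * prodmw l)) := by
            rw [← pow_add, add_one_mul]

lemma reorder (m₁ m₂ : ℕ) (L₁ L₂ : List Fˣ) :
    (mweta F ^ m₁ * prodmw L₁) * (mweta F ^ m₂ * prodmw L₂)
      = mweta F ^ (m₁ + m₂) * (prodmw L₁ * prodmw L₂) := by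
  rw [mul_assoc, ← mul_assoc (prodmw L₁), ← eta_pow_central m₂ (prodmw L₁),
    mul_assoc (mweta F ^ m₂), ← mul_assoc, ← pow_add]

lemma gen_comm (m₁ m₂ : ℕ) (L₁ L₂ : List Fˣ) :
    (mweta F ^ m₁ * prodmw L₁) * (mweta F ^ m₂ * prodmw L₂)
      = eps F ^ (L₁.length * L₂.length) *
          ((mweta F ^ m₂ * prodmw L₂) * (mweta F ^ m₁ * prodmw L₁)) := by
  rw [reorder, reorder, comm_prod_prod, ← mul_assoc, ← eps_pow_central, mul_assoc,
    Nat.add_comm m₂ m₁]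

lemma gen_comm' (mm nn : ℤ) (m₁ m₂ : ℕ) (L₁ L₂ : List Fˣ)
    (h₁ : (L₁.length : ℤ) - m₁ = mm) (h₂ : (L₂.length : ℤ) - m₂ = nn) :
    (mweta F ^ m₁ * prodmw L₁) * (mweta F ^ m₂ * prodmw L₂)
      = eps F ^ (mm * nn).natAbs *
          ((mweta F ^ m₂ * prodmw L₂) * (mweta F ^ m₁ * prodmw L₁)) := by
  rw [gen_comm]
  by_cases hz : m₁ = 0 ∧ m₂ = 0
  · obtain ⟨hz1, hz2⟩ := hz
    subst hz1; subst hz2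
    have he : mm * nn = ((L₁.length * L₂.length : ℕ) : ℤ) := by
      push_cast
      rw [← h₁, ← h₂]
      push_cast
      ring
    rw [he, Int.natAbs_natCast]
  · rw [reorder m₂ m₁ L₂ L₁]
    have habs : ∀ (k : ℕ) (z : KMW F),
        eps F ^ k * (mweta F ^ (m₂ + m₁) * z) = mweta F ^ (m₂ + m₁) * z := by
      intro k z
      have h9 : mweta F ^ (m₂ + m₁) = mweta F * mweta F ^ (m₁ + m₂ - 1) := by
        rw [← pow_succ']
        congr 1
        omega
      rw [h9, mul_assoc]
      exact eps_pow_eta_absorb k _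
    rw [habs, habs]

lemma ofFn_prod_eq (r : ℕ) (v : Fin r → Fˣ) :
    (List.ofFn fun i => mw (v i)).prod = prodmw (List.ofFn v) := by
  rw [prodmw, List.map_ofFn]
  rfl

end MWaux

theorem stmt9 (F : Type) [Field F] :
    (∀ a b : Fˣ, mw a * mw b = -(1 + mweta F * mw (-1 : Fˣ)) * (mw b * mw a)) ∧
    ∀ (m n : ℤ) (x y : KMW F), x ∈ KMWcomp F m → y ∈ KMWcomp F n →
      x * y = (-(1 + mweta F * mw (-1 : Fˣ))) ^ (m * n).natAbs * (y * x) := by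
  constructor
  · exact fun a b => MWaux.part1 a b
  · intro m n x y hx hy
    rw [← MWaux.eps_def]
    have main : ∀ x' (_ : x' ∈ KMWcomp F m), ∀ y', y' ∈ KMWcomp F n →
        x' * y' = MWaux.eps F ^ (m * n).natAbs * (y' * x') := by
      intro x' hx'
      refine AddSubgroup.closure_induction
        (p := fun z _ => ∀ y', y' ∈ KMWcomp F n →
          z * y' = MWaux.eps F ^ (m * n).natAbs * (y' * z)) ?_ ?_ ?_ ?_ hx'
      · rintro z ⟨m₁, r₁, v₁, hd₁, rfl⟩ y' hy'
        refine AddSubgroup.closure_induction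
          (p := fun w _ => (mweta F ^ m₁ * (List.ofFn fun i => mw (v₁ i)).prod) * w
            = MWaux.eps F ^ (m * n).natAbs *
              (w * (mweta F ^ m₁ * (List.ofFn fun i => mw (v₁ i)).prod))) ?_ ?_ ?_ ?_ hy'
        · rintro w ⟨m₂, r₂, v₂, hd₂, rfl⟩
          beta_reduce
          rw [MWaux.ofFn_prod_eq, MWaux.ofFn_prod_eq]
          exact MWaux.gen_comm' m n m₁ m₂ _ _
            (by rw [List.length_ofFn]; exact hd₁) (by rw [List.length_ofFn]; exact hd₂)
        · beta_reduce
          rw [mul_zero, zero_mul, mul_zero]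
        · intro w1 w2 hw1m hw2m h1 h2
          beta_reduce at h1 h2 ⊢
          rw [mul_add, h1, h2, add_mul (w1) (w2), mul_add]
        · intro w hwm h1
          beta_reduce at h1 ⊢
          rw [mul_neg, h1, neg_mul, mul_neg]
      · intro y' hy'
        rw [zero_mul, mul_zero, mul_zero]
      · intro z1 z2 hz1 hz2 h1 h2 y' hy'
        beta_reduce
        rw [add_mul, h1 y' hy', h2 y' hy', mul_add y', mul_add]
      · intro z hz h1 y' hy'
        beta_reduce
        rw [neg_mul, h1 y' hy', mul_neg, mul_neg]
    exact main x hx y hy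
end
end

section
/- In K^MW_1(F), for every unit a ∈ F^× and every integer n, one has [aⁿ] = n_ε · [a], where n_ε := Σ_{i=1}^{n} ⟨(-1)^{i-1}⟩ for n ≥ 0, and n_ε := -⟨-1⟩·(-n)_ε for n < 0. -/
noncomputable section

/-- `n_ε` for `n ≥ 0`: the sum `Σ_{i=1}^{n} ⟨(-1)^{i-1}⟩` in `K^MW_0(F)`. -/
def epsNat (F : Type) [Field F] (n : ℕ) : KMW F :=
  ∑ i ∈ Finset.range n, (1 + mweta F * mw ((-1 : Fˣ) ^ i))

/-- `n_ε ∈ K^MW_0(F)` for an arbitrary integer `n`, with `n_ε = -⟨-1⟩·(-n)_ε` for `n < 0`. -/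
def epsInt (F : Type) [Field F] (n : ℤ) : KMW F :=
  if 0 ≤ n then epsNat F n.toNat
  else -(1 + mweta F * mw (-1 : Fˣ)) * epsNat F (-n).toNat

namespace KMWaux
variable {F : Type} [Field F]

lemma mw_mul (a b : Fˣ) : mw (a * b) = mw a + mw b + mweta F * mw a * mw b := by
  have h := RingQuot.mkRingHom_rel (MWRel.mul_rel (F := F) a b)
  simp [mw, mweta, map_add, map_mul] at h ⊢; exact h

lemma eta_comm (u : Fˣ) : mweta F * mw u = mw u * mweta F := by
  have h := RingQuot.mkRingHom_rel (MWRel.comm_rel (F := F) u)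
  simp [mw, mweta, map_mul] at h ⊢; exact h

lemma hyp' : mweta F * (mweta F * mw (-1 : Fˣ) + 2) = 0 := by
  have h := RingQuot.mkRingHom_rel (MWRel.hyp (F := F))
  simp [mw, mweta, map_add, map_mul, map_ofNat] at h ⊢; exact h

lemma steinberg (a b : Fˣ) (h : (b : F) = 1 - (a : F)) : mw a * mw b = 0 := by
  have h1 : (a : F) ≠ 1 := by
    intro h1
    exact b.ne_zero (by rw [h, h1, sub_self])
  have hb : b = Units.mk0 (1 - (a : F)) (sub_ne_zero_of_ne h1.symm) := Units.ext h
  have hr := RingQuot.mkRingHom_rel (MWRel.steinberg (F := F) a h1)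
  rw [hb]
  simp [mw, map_mul] at hr ⊢; exact hr

lemma eta_mid (a : Fˣ) (x : KMW F) : mw a * (mweta F * x) = mweta F * (mw a * x) := by
  rw [← mul_assoc, ← eta_comm, mul_assoc]

lemma eta_sq_neg_one : mweta F * mweta F * mw (-1 : Fˣ) = -(2 * mweta F) := by
  have h := hyp' (F := F)
  rw [mul_add, ← mul_assoc] at h
  have h2 := eq_neg_of_add_eq_zero_left h
  rw [h2, mul_two, two_mul]

lemma eta_mw_one : mweta F * mw (1 : Fˣ) = 0 := by
  have h1 : mw (1 : Fˣ) = mw (-1 : Fˣ) + mw (-1 : Fˣ) + mweta F * mw (-1 : Fˣ) * mw (-1 : Fˣ) := by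
    have := mw_mul (F := F) (-1) (-1); simpa using this
  rw [h1, mul_add, mul_add, ← mul_assoc, ← mul_assoc, eta_sq_neg_one]
  noncomm_ring

lemma mw_one : mw (1 : Fˣ) = 0 := by
  have h1 : mw (1 : Fˣ) = mw 1 + mw 1 + mweta F * mw 1 * mw 1 := by
    simpa using mw_mul (F := F) 1 1
  rw [add_assoc] at h1
  have h2 := left_eq_add.mp h1
  rw [eta_mw_one, zero_mul, add_zero] at h2
  exact h2

/-- `⟨a⟩ = 1 + η[a]`. -/
def hh (a : Fˣ) : KMW F := 1 + mweta F * mw a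

lemma mw_mul' (a b : Fˣ) : mw (a * b) = mw a + hh a * mw b := by
  rw [mw_mul, hh, add_mul, one_mul, add_assoc, mul_assoc]

lemma hh_mul (a b : Fˣ) : hh a * hh b = hh (a * b) := by
  have key : mweta F * mw a * (mweta F * mw b) = mweta F * (mweta F * mw a * mw b) := by
    rw [mul_assoc (mweta F) (mw a), eta_mid]
    noncomm_ring
  have expand : hh a * hh b =
      1 + mweta F * mw a + mweta F * mw b + mweta F * mw a * (mweta F * mw b) := by
    rw [hh, hh]; noncomm_ring
  rw [expand, key, hh, mw_mul]
  noncomm_ring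

lemma hh_comm (a b : Fˣ) : hh a * hh b = hh b * hh a := by
  rw [hh_mul, hh_mul, mul_comm a b]

lemma hh_one : hh (1 : Fˣ) = 1 := by rw [hh, eta_mw_one, add_zero]

lemma hh_inv_mul (a : Fˣ) : hh a⁻¹ * hh a = 1 := by rw [hh_mul, inv_mul_cancel, hh_one]

lemma hh_mw_inv (a : Fˣ) : hh a * mw a⁻¹ = -mw a := by
  have h : (0 : KMW F) = mw a + hh a * mw a⁻¹ := by
    rw [← mw_mul', mul_inv_cancel, mw_one]
  exact eq_neg_of_add_eq_zero_right h.symm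

lemma mw_hh (u v : Fˣ) (h : mw u * mw v = 0) : mw u * hh v = mw u := by
  rw [hh, mul_add, mul_one, eta_mid, h, mul_zero, add_zero]

lemma mw_mul_neg_self (u : Fˣ) : mw u * mw (-u) = 0 := by
  by_cases hu : u = 1
  · subst hu; rw [mw_one, zero_mul]
  · have hu1 : (u : F) ≠ 1 := by
      intro h; apply hu; ext; rw [h, Units.val_one]
    have hne : (1 : F) - (u : F)⁻¹ ≠ 0 := by
      rw [sub_ne_zero]
      intro h
      field_simp at h
      first
        | exact hu1 h
        | exact hu1 h.symm
        | exact hu h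

    set v : Fˣ := Units.mk0 (1 - (u : F)) (sub_ne_zero_of_ne hu1.symm) with hv
    set w : Fˣ := (Units.mk0 (1 - (u : F)⁻¹) hne)⁻¹ with hw
    have huvw : -u = v * w := by
      apply Units.ext
      push_cast [hv, hw]
      simp only [Units.val_mk0]
      rw [eq_comm, mul_inv_eq_iff_eq_mul₀ hne]
      field_simp
      ring
    have s1 : mw u * mw v = 0 := steinberg u v rfl
    have s2 : mw u⁻¹ * mw w⁻¹ = 0 := by
      apply steinberg
      simp [hw]
    have hw1 : mw u⁻¹ * mw w = 0 := by
      have h0 : (0 : KMW F) = mw w⁻¹ + hh w⁻¹ * mw w := by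
        rw [← mw_mul', inv_mul_cancel, mw_one]
      have h3 : hh w⁻¹ * mw w = -mw w⁻¹ := eq_neg_of_add_eq_zero_right h0.symm
      rw [hh, add_mul, one_mul] at h3
      have hww : mw w = -mw w⁻¹ - mweta F * mw w⁻¹ * mw w := eq_sub_of_add_eq h3
      rw [hww, mul_sub, mul_neg, s2, neg_zero, zero_sub, neg_eq_zero,
        mul_assoc (mweta F), eta_mid, ← mul_assoc (mw u⁻¹), s2, zero_mul, mul_zero]
    have hu_eq : mw u = -(hh u * mw u⁻¹) := by rw [hh_mw_inv, neg_neg]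
    have huw : mw u * mw w = 0 := by
      rw [hu_eq, neg_mul, mul_assoc, hw1, mul_zero, neg_zero]
    rw [huvw, mw_mul', mul_add, s1, zero_add, ← mul_assoc, mw_hh u v s1, huw]

lemma mw_sq_right (u : Fˣ) : mw u * mw u = mw u * mw (-1 : Fˣ) := by
  have h : mw ((-u) * (-1)) = mw (-u) + hh (-u) * mw (-1) := mw_mul' _ _
  have h2 : (-u) * (-1) = u := by simp
  rw [h2] at h
  calc mw u * mw u = mw u * (mw (-u) + hh (-u) * mw (-1)) := by rw [← h]
    _ = mw u * mw (-1) := by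
        rw [mul_add, mw_mul_neg_self, zero_add, ← mul_assoc, mw_hh u (-u) (mw_mul_neg_self u)]

lemma mw_sq_left (u : Fˣ) : mw u * mw u = mw (-1 : Fˣ) * mw u := by
  have h : mw ((-1) * (-u)) = mw (-1) + hh (-1 : Fˣ) * mw (-u) := mw_mul' _ _
  have h2 : (-1 : Fˣ) * (-u) = u := by simp
  rw [h2] at h
  have h3 : mw (-u) * mw u = 0 := by simpa using mw_mul_neg_self (-u)
  calc mw u * mw u = (mw (-1) + hh (-1 : Fˣ) * mw (-u)) * mw u := by rw [← h]
    _ = mw (-1) * mw u := by rw [add_mul, mul_assoc, h3, mul_zero, add_zero]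

lemma hh_mw_self (a : Fˣ) : hh a * mw a = hh (-1 : Fˣ) * mw a := by
  simp only [hh, add_mul, one_mul]
  rw [mul_assoc, mw_sq_left, ← mul_assoc]

lemma hh_neg_one_sq : hh (-1 : Fˣ) * hh (-1 : Fˣ) = (1 : KMW F) := by
  rw [hh_mul]
  simpa using hh_one (F := F)

lemma hh_inv_mw_self (a : Fˣ) : hh a⁻¹ * mw a = hh (-1 : Fˣ) * mw a := by
  have h1 : mw a = hh a⁻¹ * (hh (-1 : Fˣ) * mw a) := by
    conv_lhs => rw [← one_mul (mw a), ← hh_inv_mul a, mul_assoc, hh_mw_self]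
  have h2 : mw a = hh (-1 : Fˣ) * (hh a⁻¹ * mw a) := by
    conv_lhs => rw [h1]
    rw [← mul_assoc, hh_comm, mul_assoc]
  conv_rhs => rw [h2]
  rw [← mul_assoc, hh_neg_one_sq, one_mul]

lemma hh_pow (a : Fˣ) (i : ℕ) : hh (a ^ i) = hh a ^ i := by
  induction i with
  | zero => simpa using hh_one (F := F)
  | succ n ih => rw [pow_succ, pow_succ, ← hh_mul, ih]

lemma epsNat_eq (n : ℕ) : epsNat F n = ∑ i ∈ Finset.range n, hh (-1 : Fˣ) ^ i := by
  unfold epsNat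
  exact Finset.sum_congr rfl fun i _ => by rw [← hh_pow]; rfl

lemma mw_pow (a : Fˣ) (n : ℕ) : mw (a ^ n) = epsNat F n * mw a := by
  rw [epsNat_eq]
  induction n with
  | zero => simp [mw_one]
  | succ n ih =>
    have hc : ∀ i : ℕ, hh a * (hh (-1 : Fˣ) ^ i * mw a) = hh (-1 : Fˣ) ^ (i + 1) * mw a := by
      intro i
      have hcomm : hh a * hh (-1 : Fˣ) ^ i = hh (-1 : Fˣ) ^ i * hh a :=
        Commute.pow_right (hh_comm a (-1)) i
      rw [← mul_assoc, hcomm, mul_assoc, hh_mw_self, pow_succ, mul_assoc]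
    calc mw (a ^ (n + 1)) = mw (a * a ^ n) := by rw [← pow_succ']
      _ = mw a + hh a * (( ∑ i ∈ Finset.range n, hh (-1 : Fˣ) ^ i) * mw a) := by
          rw [mw_mul', ih]
      _ = mw a + ∑ i ∈ Finset.range n, hh (-1 : Fˣ) ^ (i + 1) * mw a := by
          rw [Finset.sum_mul, Finset.mul_sum]
          congr 1
          exact Finset.sum_congr rfl fun i _ => hc i
      _ = (∑ i ∈ Finset.range (n + 1), hh (-1 : Fˣ) ^ i) * mw a := by
          rw [Finset.sum_mul, Finset.sum_range_succ']
          rw [pow_zero, one_mul, add_comm]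

lemma mw_inv_eq (b : Fˣ) : mw b⁻¹ = -(hh (-1 : Fˣ) * mw b) := by
  have h : hh b⁻¹ * mw b = -mw b⁻¹ := by
    have := hh_mw_inv (a := b⁻¹); rwa [inv_inv] at this
  rw [← hh_inv_mw_self, h, neg_neg]

end KMWaux

theorem stmt11 (F : Type) [Field F] (a : Fˣ) (n : ℤ) :
    mw (a ^ n) = epsInt F n * mw a := by
  open KMWaux in
  rcases le_or_gt 0 n with hn | hn
  · rw [epsInt, if_pos hn]
    have : a ^ n = a ^ n.toNat := by
      rw [← zpow_natCast, Int.toNat_of_nonneg hn]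
    rw [this, mw_pow]
  · rw [epsInt, if_neg (not_le.mpr hn)]
    set m : ℕ := (-n).toNat with hm
    have hnm : n = -(m : ℤ) := by
      rw [hm, Int.toNat_of_nonneg (by omega)]; ring
    have : a ^ n = (a ^ m)⁻¹ := by
      rw [hnm, zpow_neg, zpow_natCast]
    rw [this, mw_inv_eq, mw_pow, neg_mul, ← mul_assoc]
    have hhh : (1 + mweta F * mw (-1 : Fˣ)) = hh (-1 : Fˣ) := rfl
    rw [hhh, neg_mul]
end
end

section
/- The assignment ⟨u⟩_GW ↦ ⟨u⟩ := 1 + η[u] extends to a well-defined surjective ring homomorphism φ₀ : GW(F) → K^MW_0(F), i.e. the elements ⟨u⟩ in K^MW_0(F) satisfy the Grothendieck-Witt relations: ⟨uv²⟩ = ⟨u⟩, ⟨u⟩ + ⟨-u⟩ = 1 + ⟨-1⟩, and ⟨u⟩ + ⟨v⟩ = ⟨u+v⟩ + ⟨(u+v)uv⟩ when u + v ≠ 0. -/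
noncomputable section

/-- The defining relations of the Grothendieck–Witt ring `GW(F)`, presented as a
commutative ring with generators `⟨u⟩` for `u ∈ Fˣ`: the additive relations
GW1–GW3 together with multiplicativity of the symbols. -/
inductive GWRel (F : Type) [Field F] :
    MvPolynomial Fˣ ℤ → MvPolynomial Fˣ ℤ → Prop
  | sq (u v : Fˣ) : GWRel F (MvPolynomial.X (u * v ^ 2)) (MvPolynomial.X u)
  | hyp (u : Fˣ) :
      GWRel F (MvPolynomial.X u + MvPolynomial.X (-u))
        (1 + MvPolynomial.X (-1 : Fˣ))
  | add (u v : Fˣ) (h : (u : F) + (v : F) ≠ 0) :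
      GWRel F (MvPolynomial.X u + MvPolynomial.X v)
        (MvPolynomial.X (Units.mk0 ((u : F) + (v : F)) h) +
          MvPolynomial.X (Units.mk0 ((u : F) + (v : F)) h * u * v))
  | mul (u v : Fˣ) :
      GWRel F (MvPolynomial.X u * MvPolynomial.X v) (MvPolynomial.X (u * v))
  | one : GWRel F (MvPolynomial.X (1 : Fˣ)) 1

/-- The Grothendieck–Witt ring `GW(F)` of the field `F`, via its presentation. -/
def GW (F : Type) [Field F] : Type := RingQuot (GWRel F)

instance (F : Type) [Field F] : CommRing (GW F) :=
  inferInstanceAs (CommRing (RingQuot (GWRel F)))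

/-- The generator `⟨u⟩ ∈ GW(F)`. -/
def gw {F : Type} [Field F] (u : Fˣ) : GW F :=
  RingQuot.mkRingHom (GWRel F) (MvPolynomial.X u)

/-- The hyperbolic element `h = 1 + ⟨-1⟩ ∈ GW(F)`. -/
def hGW (F : Type) [Field F] : GW F := 1 + gw (-1 : Fˣ)

/-- The Witt ring `W(F) := GW(F)/(h)`. -/
def WittRing (F : Type) [Field F] : Type := GW F ⧸ Ideal.span {hGW F}

instance (F : Type) [Field F] : CommRing (WittRing F) :=
  inferInstanceAs (CommRing (GW F ⧸ Ideal.span {hGW F}))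

/-- The quotient map `GW(F) → W(F)`. -/
def wq (F : Type) [Field F] : GW F →+* WittRing F :=
  Ideal.Quotient.mk (Ideal.span {hGW F})

/-!
The forms `⟨u⟩ = 1 + η[u]` are multiplicative in `K^MW_*(F)` (relation KMW2, together with `η`
commuting with symbols), so they commute and generate a commutative subring. There they satisfy
`h · (⟨a⟩ - 1) = 0` for `h = 1 + ⟨-1⟩` (this is `η h = 0`) and the Steinberg relation
`(⟨a⟩ - 1)(⟨1 - a⟩ - 1) = η²[a][1 - a] = 0`. In a commutative ring these two relations already
imply the Grothendieck–Witt relations: `[a][-a] = 0` follows from Steinberg and gives `⟨a⟩² = 1`,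
hence GW1; GW2 is the hyperbolic relation; GW3 is the Steinberg relation for `u/s + v/s = 1`,
`s = u + v`. The presentation of `GW(F)` then yields `φ₀`, whose image is the subring generated by
the `⟨u⟩`. That subring is `K^MW_0(F)`, since a degree-0 monomial `η^r [v₁]⋯[v_r]` is the product
of the `η[vᵢ] = ⟨vᵢ⟩ - 1`.
-/

open MvPolynomial

section KMWRelations

variable {F : Type} [Field F]

theorem mw_mul (a b : Fˣ) : mw (a * b) = mw a + mw b + mweta F * mw a * mw b := by
  have h := RingQuot.mkRingHom_rel (MWRel.mul_rel (F := F) a b)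
  simp only [map_add, map_mul] at h
  exact h

theorem mweta_commute_mw (u : Fˣ) : Commute (mweta F) (mw u) := by
  have h := RingQuot.mkRingHom_rel (MWRel.comm_rel (F := F) u)
  simp only [map_mul] at h
  exact h

theorem mweta_mul_hyperbolic : mweta F * (mweta F * mw (-1 : Fˣ) + 2) = 0 := by
  have h := RingQuot.mkRingHom_rel (MWRel.hyp (F := F))
  simp only [map_add, map_mul, map_ofNat, map_zero] at h
  exact h

theorem mw_mul_mw_of_add_eq_one {a b : Fˣ} (hab : (a : F) + b = 1) : mw a * mw b = 0 := by
  have ha : (a : F) ≠ 1 := fun h => b.ne_zero (by linear_combination hab - h)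
  obtain rfl : b = Units.mk0 (1 - (a : F)) (sub_ne_zero_of_ne ha.symm) :=
    Units.ext (by simp only [Units.val_mk0]; linear_combination hab)
  have h := RingQuot.mkRingHom_rel (MWRel.steinberg (F := F) a ha)
  simp only [map_mul, map_zero] at h
  exact h

theorem mw_mul_mweta_mul (u : Fˣ) (x : KMW F) :
    mw u * (mweta F * x) = mweta F * (mw u * x) := by
  rw [← mul_assoc, ← (mweta_commute_mw u).eq, mul_assoc]

def mwForm (u : Fˣ) : KMW F := 1 + mweta F * mw u

theorem mwForm_mul (a b : Fˣ) : mwForm (a * b) = mwForm a * mwForm b := by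
  simp only [mwForm, mw_mul, add_mul, mul_add, one_mul, mul_one, mul_assoc, mw_mul_mweta_mul]
  abel

theorem mwForm_mul_comm (a b : Fˣ) : mwForm a * mwForm b = mwForm b * mwForm a := by
  rw [← mwForm_mul, ← mwForm_mul, mul_comm]

theorem hyperbolic_mul_mwForm_sub_one (a : Fˣ) :
    (1 + mwForm (-1 : Fˣ)) * (mwForm a - 1) = 0 := by
  calc (1 + mwForm (-1 : Fˣ)) * (mwForm a - 1)
      = mweta F * (mweta F * mw (-1 : Fˣ) + 2) * mw a := by
        simp only [mwForm, add_sub_cancel_left, add_mul, mul_add, mul_assoc, mw_mul_mweta_mul]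
        noncomm_ring
    _ = 0 := by rw [mweta_mul_hyperbolic, zero_mul]

theorem mwForm_one : mwForm (1 : Fˣ) = 1 := by
  have h : (1 : Fˣ) = -1 * -1 := by rw [neg_mul_neg, mul_one]
  rw [← sub_eq_zero, h, mwForm_mul, ← hyperbolic_mul_mwForm_sub_one (-1)]
  noncomm_ring

theorem mwForm_sub_one_mul_of_add_eq_one {a b : Fˣ} (hab : (a : F) + b = 1) :
    (mwForm a - 1) * (mwForm b - 1) = 0 := by
  simp only [mwForm, add_sub_cancel_left, mul_assoc, mw_mul_mweta_mul,
    mw_mul_mw_of_add_eq_one hab, mul_zero]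

end KMWRelations

theorem MonoidHom.map_mul_map_inv {G M : Type*} [Group G] [Monoid M] (f : G →* M) (a : G) :
    f a * f a⁻¹ = 1 := by
  rw [← map_mul, mul_inv_cancel, map_one]

/-- The relations satisfied by the forms `⟨u⟩` in `K^MW_0(F)`, with `h = 1 + ⟨-1⟩`. -/
structure MWFormRelations {F R : Type*} [Field F] [CommRing R] (χ : Fˣ →* R) : Prop where
  hyperbolic : ∀ a, (1 + χ (-1)) * (χ a - 1) = 0
  steinberg : ∀ a b : Fˣ, (a : F) + b = 1 → (χ a - 1) * (χ b - 1) = 0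

namespace MWFormRelations

variable {F R : Type*} [Field F] [CommRing R] {χ : Fˣ →* R}

/-- `-a = (1 - a) / (1 - a⁻¹)` turns the Steinberg relation into `[a][-a] = 0`. -/
theorem sub_one_mul_map_neg_sub_one (hχ : MWFormRelations χ) (a : Fˣ) :
    (χ a - 1) * (χ (-a) - 1) = 0 := by
  by_cases ha : (a : F) = 1
  · rw [Units.val_eq_one.mp ha, map_one, sub_self, zero_mul]
  have ha' : ((a⁻¹ : Fˣ) : F) ≠ 1 := by simpa only [Ne, Units.val_eq_one, inv_eq_one] using ha
  set b := Units.mk0 (1 - (a : F)) (sub_ne_zero_of_ne (Ne.symm ha))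
  set c := Units.mk0 (1 - ((a⁻¹ : Fˣ) : F)) (sub_ne_zero_of_ne (Ne.symm ha'))
  have hneg : -a = b * c⁻¹ := by
    rw [eq_mul_inv_iff_mul_eq]
    ext
    simp only [b, c, Units.val_mul, Units.val_neg, Units.val_mk0, Units.val_inv_eq_inv_val]
    field_simp
    ring
  have hab := hχ.steinberg a b (by simp [b])
  have hac := hχ.steinberg a⁻¹ c (by simp [c])
  rw [hneg, map_mul]
  linear_combination χ c⁻¹ * hab + χ a * χ c⁻¹ * hac +
    (χ c⁻¹ - χ c * χ c⁻¹) * χ.map_mul_map_inv a + (χ a - 1) * χ.map_mul_map_inv c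

theorem map_mul_self (hχ : MWFormRelations χ) (a : Fˣ) : χ a * χ a = 1 := by
  have hneg := hχ.sub_one_mul_map_neg_sub_one a
  rw [← neg_one_mul a, map_mul] at hneg
  linear_combination χ a * hχ.hyperbolic a - hneg

theorem map_mul_sq (hχ : MWFormRelations χ) (u v : Fˣ) : χ (u * v ^ 2) = χ u := by
  rw [map_mul, map_pow, sq, hχ.map_mul_self, mul_one]

theorem map_add_map_neg (hχ : MWFormRelations χ) (u : Fˣ) : χ u + χ (-u) = 1 + χ (-1) := by
  rw [← neg_one_mul u, map_mul]
  linear_combination hχ.hyperbolic u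

/-- With `s = u + v`, the Steinberg relation for `u/s + v/s = 1` gives the identity. -/
theorem map_add_map (hχ : MWFormRelations χ) (u v s : Fˣ) (hs : (s : F) = u + v) :
    χ u + χ v = χ s + χ (s * u * v) := by
  obtain ⟨a, rfl⟩ : ∃ a, u = a * s := ⟨u * s⁻¹, by rw [inv_mul_cancel_right]⟩
  obtain ⟨b, rfl⟩ : ∃ b, v = b * s := ⟨v * s⁻¹, by rw [inv_mul_cancel_right]⟩
  have hst := hχ.steinberg a b (by
    simpa [← add_mul, s.ne_zero] using congrArg (· * (s : F)⁻¹) hs.symm)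
  rw [show s * (a * s) * (b * s) = a * b * (s * s * s) by ac_rfl]
  simp only [map_mul]
  linear_combination (-(χ s) ^ 3) * hst - (χ a + χ b - 1) * χ s * hχ.map_mul_self s

end MWFormRelations

namespace GW

variable {F : Type} {R : Type*} [Field F] [CommRing R]

def lift (χ : Fˣ →* R) (sq : ∀ u v, χ (u * v ^ 2) = χ u)
    (hyp : ∀ u, χ u + χ (-u) = 1 + χ (-1))
    (add : ∀ u v s : Fˣ, (s : F) = u + v → χ u + χ v = χ s + χ (s * u * v)) : GW F →+* R :=
  RingQuot.lift ⟨eval₂Hom (Int.castRingHom R) χ, fun x y (h : GWRel F x y) => by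
    cases h with
    | sq u v => simpa only [eval₂Hom_X'] using sq u v
    | hyp u => simpa only [map_add, map_one, eval₂Hom_X'] using hyp u
    | add u v h => simpa only [map_add, eval₂Hom_X'] using add u v _ rfl
    | mul u v => simp only [map_mul, eval₂Hom_X']
    | one => simp only [map_one, eval₂Hom_X']⟩

theorem lift_gw (χ : Fˣ →* R) {sq hyp add} (u : Fˣ) : lift χ sq hyp add (gw u) = χ u :=
  (RingQuot.lift_mkRingHom_apply _ _ (X u)).trans (eval₂Hom_X' _ _ _)

end GW

section FormSubring

variable (F : Type) [Field F]

def formSubring : Subring (KMW F) := Subring.closure (Set.range mwForm)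

instance : IsMulCommutative (formSubring F) :=
  Subring.isMulCommutative_closure (by rintro _ ⟨a, rfl⟩ _ ⟨b, rfl⟩; exact mwForm_mul_comm a b)

open scoped IsMulCommutative in
instance : CommRing (formSubring F) := inferInstance

def mwFormHom : Fˣ →* formSubring F where
  toFun u := ⟨mwForm u, Subring.subset_closure ⟨u, rfl⟩⟩
  map_one' := Subtype.ext mwForm_one
  map_mul' a b := Subtype.ext (mwForm_mul a b)

theorem mwFormHom_relations : MWFormRelations (mwFormHom F) where
  hyperbolic a := Subtype.ext (hyperbolic_mul_mwForm_sub_one a)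
  steinberg _ _ hab := Subtype.ext (mwForm_sub_one_mul_of_add_eq_one hab)

def GW.toKMW : GW F →+* KMW F :=
  have hχ := mwFormHom_relations F
  (formSubring F).subtype.comp (GW.lift _ hχ.map_mul_sq hχ.map_add_map_neg hχ.map_add_map)

theorem GW.toKMW_gw (u : Fˣ) : GW.toKMW F (gw u) = mwForm u := by
  simp only [GW.toKMW, RingHom.comp_apply, GW.lift_gw]
  rfl

theorem GW.range_toKMW : (GW.toKMW F).range = formSubring F := by
  refine le_antisymm ?_ (Subring.closure_le.mpr ?_)
  · rintro _ ⟨x, rfl⟩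
    exact Subtype.property _
  · rintro _ ⟨u, rfl⟩
    exact ⟨gw u, GW.toKMW_gw F u⟩

end FormSubring

section Grading

variable {F : Type} [Field F]

theorem mweta_commute_prod_map_mw (l : List Fˣ) : Commute (mweta F) (l.map mw).prod :=
  Commute.list_prod_right _ _ fun _ hy => by
    obtain ⟨u, -, rfl⟩ := List.mem_map.mp hy
    exact mweta_commute_mw u

theorem prod_ofFn_mw {r : ℕ} (v : Fin r → Fˣ) :
    (List.ofFn fun i => mw (v i)).prod = ((List.ofFn v).map mw).prod := by
  rw [List.map_ofFn]
  rfl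

theorem mweta_pow_mul_prod_mul_mweta_pow_mul_prod (a b : ℕ) {r s : ℕ} (v : Fin r → Fˣ)
    (w : Fin s → Fˣ) :
    mweta F ^ a * (List.ofFn fun i => mw (v i)).prod *
        (mweta F ^ b * (List.ofFn fun i => mw (w i)).prod) =
      mweta F ^ (a + b) * (List.ofFn fun i => mw (Fin.append v w i)).prod := by
  simp only [prod_ofFn_mw, List.ofFn_fin_append, List.map_append, List.prod_append, pow_add]
  rw [mul_assoc, ← mul_assoc _ (mweta F ^ b), ← ((mweta_commute_prod_map_mw _).pow_left b).eq]
  simp only [mul_assoc]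

theorem mul_mem_KMWcomp {m n : ℤ} {x y : KMW F} (hx : x ∈ KMWcomp F m)
    (hy : y ∈ KMWcomp F n) : x * y ∈ KMWcomp F (m + n) := by
  refine (AddSubgroup.closure_le (KMWcomp F (m + n) |>.comap (AddMonoidHom.mulRight y))).mpr
    ?_ hx
  rintro _ ⟨a, r, v, rfl, rfl⟩
  refine (AddSubgroup.closure_le (KMWcomp F _ |>.comap (AddMonoidHom.mulLeft _))).mpr ?_ hy
  rintro _ ⟨b, s, w, rfl, rfl⟩
  refine AddSubgroup.subset_closure ⟨a + b, r + s, Fin.append v w, by push_cast; ring, ?_⟩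
  exact mweta_pow_mul_prod_mul_mweta_pow_mul_prod a b v w

theorem prod_ofFn_mweta_mul_mw {r : ℕ} (v : Fin r → Fˣ) :
    (List.ofFn fun i => mweta F * mw (v i)).prod =
      mweta F ^ r * (List.ofFn fun i => mw (v i)).prod := by
  induction r with
  | zero => simp
  | succ r ih =>
    rw [List.ofFn_succ, List.prod_cons, ih, List.ofFn_succ, List.prod_cons, pow_succ', mul_assoc,
      mul_assoc, ← mul_assoc (mw _), ← ((mweta_commute_mw _).pow_left r).eq, mul_assoc]

theorem one_mem_KMWcomp_zero : (1 : KMW F) ∈ KMWcomp F 0 :=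
  AddSubgroup.subset_closure ⟨0, 0, Fin.elim0, by simp, by simp⟩

theorem mwForm_mem_KMWcomp_zero (u : Fˣ) : mwForm u ∈ KMWcomp F 0 :=
  add_mem one_mem_KMWcomp_zero
    (AddSubgroup.subset_closure ⟨1, 1, fun _ => u, by simp, by simp⟩)

end Grading

theorem KMWcomp_zero_eq_formSubring (F : Type) [Field F] :
    KMWcomp F 0 = (formSubring F).toAddSubgroup := by
  refine le_antisymm ((AddSubgroup.closure_le _).mpr ?_) fun x hx => ?_
  · rintro _ ⟨m, r, v, hrm, rfl⟩
    obtain rfl : r = m := by omega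
    rw [SetLike.mem_coe, Subring.mem_toAddSubgroup, ← prod_ofFn_mweta_mul_mw]
    refine Subring.list_prod_mem _ fun _ hx => ?_
    obtain ⟨i, rfl⟩ := List.mem_ofFn.mp hx
    rw [← add_sub_cancel_left 1 (mweta F * mw (v i))]
    exact sub_mem (Subring.subset_closure ⟨v i, rfl⟩) (one_mem _)
  · induction hx using Subring.closure_induction with
    | mem _ h => obtain ⟨u, rfl⟩ := h; exact mwForm_mem_KMWcomp_zero u
    | zero => exact zero_mem _
    | one => exact one_mem_KMWcomp_zero
    | add _ _ _ _ hx hy => exact add_mem hx hy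
    | neg _ _ hx => exact neg_mem hx
    | mul _ _ _ _ hx hy => simpa using mul_mem_KMWcomp hx hy

theorem stmt12 (F : Type) [Field F] :
    (∀ u v : Fˣ, (1 + mweta F * mw (u * v ^ 2)) = 1 + mweta F * mw u) ∧
    (∀ u : Fˣ,
      (1 + mweta F * mw u) + (1 + mweta F * mw (-u)) =
        1 + (1 + mweta F * mw (-1 : Fˣ))) ∧
    (∀ (u v : Fˣ) (h : (u : F) + (v : F) ≠ 0),
      (1 + mweta F * mw u) + (1 + mweta F * mw v) =
        (1 + mweta F * mw (Units.mk0 ((u : F) + (v : F)) h)) +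
          (1 + mweta F * mw (Units.mk0 ((u : F) + (v : F)) h * u * v))) ∧
    ∃ φ : GW F →+* KMW F,
      (∀ u : Fˣ, φ (gw u) = 1 + mweta F * mw u) ∧
      (∀ x : GW F, φ x ∈ KMWcomp F 0) ∧
      (∀ y ∈ KMWcomp F 0, ∃ x : GW F, φ x = y) := by
  have hχ := mwFormHom_relations F
  have hrange (y : KMW F) : y ∈ KMWcomp F 0 ↔ ∃ x, GW.toKMW F x = y := by
    rw [KMWcomp_zero_eq_formSubring, Subring.mem_toAddSubgroup, ← GW.range_toKMW,
      RingHom.mem_range]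
  refine ⟨fun u v => congrArg Subtype.val (hχ.map_mul_sq u v),
    fun u => congrArg Subtype.val (hχ.map_add_map_neg u),
    fun u v h => congrArg Subtype.val (hχ.map_add_map u v _ rfl),
    GW.toKMW F, GW.toKMW_gw F, fun x => (hrange _).mpr ⟨x, rfl⟩, fun y hy => (hrange y).mp hy⟩
end
end

section
/- Let F be a field of characteristic 2 and a, b, c ∈ F^×. In K^W_*(F): (i) ⟦a⟧⟦b⟧ = ⟦a⟧⟦ab⟧; (ii) if c = u² + v²a for some u, v ∈ F, then ⟦a⟧⟦b⟧ = ⟦a⟧⟦bc⟧; (iii) if c = u²a + v²b for some u, v ∈ F, then ⟦a⟧⟦b⟧ = ⟦ab⟧⟦c⟧. -/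
noncomputable section

/-- The hyperbolic element `h = η[-1] + 2 ∈ K^MW_0(F)`. -/
def hKMW (F : Type) [Field F] : KMW F := mweta F * mw (-1) + 2

/-- Witt K-theory `K^W_*(F) := K^MW_*(F)/(h)`. -/
def KW (F : Type) [Field F] : Type :=
  RingQuot (fun x y : KMW F => x = hKMW F ∧ y = 0)

instance (F : Type) [Field F] : Ring (KW F) :=
  inferInstanceAs (Ring (RingQuot (fun x y : KMW F => x = hKMW F ∧ y = 0)))

/-- The quotient map `K^MW_*(F) → K^W_*(F)`. -/
def kwq (F : Type) [Field F] : KMW F →+* KW F :=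
  RingQuot.mkRingHom (fun x y : KMW F => x = hKMW F ∧ y = 0)

/-- The class `⟦a⟧ ∈ K^W_1(F)` of the symbol `[a]`. -/
def kw {F : Type} [Field F] (a : Fˣ) : KW F := kwq F (mw a)

/-- The degree-`n` homogeneous component of `K^W_*(F)`. -/
def KWcomp (F : Type) [Field F] (n : ℤ) : AddSubgroup (KW F) :=
  AddSubgroup.map (kwq F).toAddMonoidHom (KMWcomp F n)

-- auxiliary
namespace StmtAux
variable {F : Type} [Field F]

lemma mw_comm (u : Fˣ) : mweta F * mw u = mw u * mweta F := by
  have h1 := RingQuot.mkRingHom_rel (MWRel.comm_rel (F := F) u)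
  rw [map_mul, map_mul] at h1
  exact h1

lemma mw_mul (a b : Fˣ) :
    mw (a * b) = mw a + mw b + mweta F * mw a * mw b := by
  have h1 := RingQuot.mkRingHom_rel (MWRel.mul_rel (F := F) a b)
  rw [map_add, map_add, map_mul, map_mul] at h1
  exact h1

lemma mw_steinberg (a : Fˣ) (h1 : (a : F) ≠ 1) :
    mw a * mw (Units.mk0 (1 - (a : F)) (sub_ne_zero_of_ne h1.symm)) = 0 := by
  have h2 := RingQuot.mkRingHom_rel (MWRel.steinberg a h1)
  rw [map_mul, map_zero] at h2
  exact h2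

def E (F : Type) [Field F] : KW F := kwq F (mweta F)

lemma kw_eta_comm (u : Fˣ) : E F * kw u = kw u * E F := by
  unfold E kw
  rw [← map_mul, mw_comm, map_mul]

lemma kw_mul (a b : Fˣ) : kw (a * b) = kw a + kw b + E F * kw a * kw b := by
  unfold E kw
  rw [← map_mul, ← map_mul, ← map_add, ← map_add, mw_mul]

lemma kw_eq {a b : Fˣ} (h : (a : F) = (b : F)) : kw a = kw b := by
  rw [Units.ext h]

lemma kw_steinberg' (a b : Fˣ) (h : (b : F) = 1 - (a : F)) : kw a * kw b = 0 := by
  have h1 : (a : F) ≠ 1 := by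
    intro h1
    rw [h1, sub_self] at h
    exact b.ne_zero h
  have hb : b = Units.mk0 (1 - (a : F)) (sub_ne_zero_of_ne h1.symm) := Units.ext h
  rw [hb]
  show kwq F (mw a) * kwq F (mw _) = 0
  rw [← map_mul, mw_steinberg a h1, map_zero]

lemma kw_h : E F * kw (-1 : Fˣ) + 2 = 0 := by
  have h : kwq F (hKMW F) = kwq F 0 := RingQuot.mkRingHom_rel ⟨rfl, rfl⟩
  rw [map_zero] at h
  unfold hKMW at h
  rw [map_add, map_mul, show (2 : KMW F) = 1 + 1 from by norm_num, map_add, map_one] at h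
  unfold E kw
  rw [show (2 : KW F) = 1 + 1 from by norm_num]
  exact h


section Char2
variable [CharP F 2]

lemma units_neg_one : (-1 : Fˣ) = 1 := by
  apply Units.ext
  rw [Units.val_neg, Units.val_one, CharTwo.neg_eq]

lemma kw_one : kw (1 : Fˣ) = 0 := by
  have h2 : E F * kw (1 : Fˣ) + 2 = 0 := by
    have := kw_h (F := F)
    rwa [units_neg_one] at this
  have h3 : E F * kw (1 : Fˣ) = -2 := eq_neg_of_add_eq_zero_left h2
  have h1 := kw_mul (F := F) 1 1
  rw [mul_one] at h1
  have h4 : kw (1 : Fˣ) + E F * kw (1 : Fˣ) * kw 1 = 0 := by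
    calc kw (1 : Fˣ) + E F * kw (1 : Fˣ) * kw 1
        = (kw (1 : Fˣ) + kw 1 + E F * kw 1 * kw 1) - kw 1 := by noncomm_ring
      _ = kw (1 : Fˣ) - kw 1 := by rw [← h1]
      _ = 0 := sub_self _
  rw [h3] at h4
  have h5 : -(kw (1 : Fˣ)) = 0 := by
    calc -(kw (1 : Fˣ)) = kw (1 : Fˣ) + (-2) * kw 1 := by noncomm_ring
      _ = 0 := h4
  exact neg_eq_zero.mp h5

lemma two_zero : (2 : KW F) = 0 := by
  have h2 := kw_h (F := F)
  rwa [units_neg_one, kw_one, mul_zero, zero_add] at h2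

lemma addself (x : KW F) : x + x = 0 := by
  have h : x + x = 2 * x := by noncomm_ring
  rw [h, two_zero, zero_mul]

lemma kw_inv_rel (u : Fˣ) : kw u + kw u⁻¹ + E F * kw u * kw u⁻¹ = 0 := by
  have h := kw_mul (F := F) u u⁻¹
  rw [mul_inv_cancel, kw_one] at h
  exact h.symm

lemma sq_zero (a : Fˣ) : kw a * kw a = 0 := by
  by_cases h : (a : F) = 1
  · have ha : a = 1 := Units.ext (by rw [h, Units.val_one])
    rw [ha, kw_one, mul_zero]
  · have hinv1 : ((a⁻¹ : Fˣ) : F) ≠ 1 := by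
      rw [Units.val_inv_eq_inv_val]
      intro hh
      exact h (by rw [← inv_inv ((a : F)), hh, inv_one])
    -- the two Steinberg units
    have hane : (a : F) ≠ 0 := a.ne_zero
    set p : Fˣ := Units.mk0 (1 - (a : F)) (sub_ne_zero_of_ne (Ne.symm h)) with hpdef
    set q : Fˣ := Units.mk0 (1 - ((a⁻¹ : Fˣ) : F)) (sub_ne_zero_of_ne (Ne.symm hinv1)) with hqdef
    have hp : kw a * kw p = 0 := kw_steinberg' a p rfl
    have hq : kw a⁻¹ * kw q = 0 := kw_steinberg' a⁻¹ q rfl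
    have h20 : (2 : F) = 0 := CharTwo.two_eq_zero
    have hval : (1 - ((a⁻¹ : Fˣ) : F)) * (a : F) = 1 - (a : F) := by
      rw [Units.val_inv_eq_inv_val]
      have h2 : ((a : F))⁻¹ * (a : F) = 1 := inv_mul_cancel₀ hane
      linear_combination (-1 : F) * h2 + ((a : F) - 1) * h20
    have hqa : q * a = p := by
      apply Units.ext
      rw [Units.val_mul, hqdef, hpdef]
      simp only [Units.val_mk0]
      exact hval
    have hpq : a = p * q⁻¹ := by
      rw [← hqa, mul_comm q a, mul_inv_cancel_right]
    have hA : kw a = kw p + kw q⁻¹ + E F * kw p * kw q⁻¹ := by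
      have := kw_mul (F := F) p q⁻¹
      rwa [← hpq] at this
    -- step 1 : kw a * kw q = 0
    have t1 : kw a * kw q = 0 := by
      have expand : kw a * kw q = (kw a + kw a⁻¹ + E F * kw a * kw a⁻¹) * kw q
          - kw a⁻¹ * kw q - E F * kw a * (kw a⁻¹ * kw q) := by noncomm_ring
      rw [expand, kw_inv_rel, hq, zero_mul, mul_zero]
      simp
    -- step 2 : kw a * kw q⁻¹ = 0
    have e3 : kw a * (E F * kw q * kw q⁻¹) = E F * (kw a * kw q) * kw q⁻¹ := by
      calc kw a * (E F * kw q * kw q⁻¹) = (kw a * E F) * (kw q * kw q⁻¹) := by noncomm_ring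
        _ = (E F * kw a) * (kw q * kw q⁻¹) := by rw [← kw_eta_comm]
        _ = E F * (kw a * kw q) * kw q⁻¹ := by noncomm_ring
    have t2 : kw a * kw q⁻¹ = 0 := by
      have expand : kw a * kw q⁻¹ =
          kw a * (kw q + kw q⁻¹ + E F * kw q * kw q⁻¹)
          - kw a * kw q - kw a * (E F * kw q * kw q⁻¹) := by noncomm_ring
      rw [expand, kw_inv_rel, mul_zero, t1, e3, t1, mul_zero, zero_mul]
      simp
    -- conclude
    have e4 : kw a * (E F * kw p * kw q⁻¹) = E F * (kw a * kw p) * kw q⁻¹ := by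
      calc kw a * (E F * kw p * kw q⁻¹) = (kw a * E F) * (kw p * kw q⁻¹) := by noncomm_ring
        _ = (E F * kw a) * (kw p * kw q⁻¹) := by rw [← kw_eta_comm]
        _ = E F * (kw a * kw p) * kw q⁻¹ := by noncomm_ring
    have expand : kw a * kw a = kw a * (kw p + kw q⁻¹ + E F * kw p * kw q⁻¹) :=
      congrArg (kw a * ·) hA
    have expand2 : kw a * (kw p + kw q⁻¹ + E F * kw p * kw q⁻¹) =
        kw a * kw p + kw a * kw q⁻¹ + kw a * (E F * kw p * kw q⁻¹) := by noncomm_ring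
    rw [expand, expand2, hp, t2, e4, hp, mul_zero, zero_mul]
    simp

lemma kwsq (s : Fˣ) : kw (s * s) = 0 := by
  rw [kw_mul, addself, mul_assoc, sq_zero, mul_zero, zero_add]

lemma kw_sq_mul (s d : Fˣ) : kw (s * s * d) = kw d := by
  rw [kw_mul, kwsq, mul_zero, zero_mul, zero_add, add_zero]

lemma kw_inv (s : Fˣ) : kw s⁻¹ = kw s := by
  have h := kw_sq_mul s⁻¹ s
  rwa [show s⁻¹ * s⁻¹ * s = s⁻¹ from by group] at h

omit [CharP F 2] in
lemma eta_swap (a b : Fˣ) : E F * (kw a * kw b) = E F * (kw b * kw a) := by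
  have h1 := kw_mul (F := F) a b
  have h2 := kw_mul (F := F) b a
  rw [mul_comm] at h1
  have h3 := h1.symm.trans h2
  calc E F * (kw a * kw b) = (kw a + kw b + E F * kw a * kw b) - kw a - kw b := by noncomm_ring
    _ = (kw b + kw a + E F * kw b * kw a) - kw a - kw b := by rw [h3]
    _ = E F * (kw b * kw a) := by noncomm_ring

/-- The key lemma: if `d` is represented by the bilinear form `⟨1, a⟩`,
then `⟦a⟧⟦d⟧ = 0`. -/
lemma key (a d : Fˣ) (u v : F) (hd : (d : F) = u ^ 2 + v ^ 2 * (a : F)) :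
    kw a * kw d = 0 := by
  -- reduce to the case `d = w ^ 2 + a`, `v = 1`
  have main : ∀ e : Fˣ, ∀ w : F, (e : F) = w ^ 2 + (a : F) → kw a * kw e = 0 := by
    intro e w he
    by_cases hw : w = 0
    · have : e = a := Units.ext (by rw [he, hw]; ring)
      rw [this]; exact sq_zero a
    · set sw : Fˣ := Units.mk0 w hw with hswdef
      have htne : ((a * e⁻¹ : Fˣ) : F) ≠ 1 := by
        rw [Units.val_mul, Units.val_inv_eq_inv_val]
        intro hh
        have : (a : F) = (e : F) := by
          field_simp at hh
          exact hh
        rw [he] at this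
        exact hw (by
          have : w ^ 2 = 0 := by linear_combination -this
          exact pow_eq_zero_iff (n := 2) (by norm_num) |>.mp this)
      have hee : (e : F) ≠ 0 := e.ne_zero
      have hstein := kw_steinberg' (a * e⁻¹) (sw * sw * e⁻¹) (by
        rw [Units.val_mul, Units.val_mul, Units.val_inv_eq_inv_val, Units.val_mul,
          Units.val_inv_eq_inv_val, hswdef]
        simp only [Units.val_mk0]
        field_simp
        linear_combination he + (w ^ 2 + (a : F) - (e : F)) * (CharTwo.two_eq_zero (R := F)))
      rw [kw_sq_mul, kw_inv] at hstein
      have hmul : kw (a * e⁻¹) = kw a + kw e + E F * kw a * kw e := by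
        rw [kw_mul, kw_inv]
      rw [hmul] at hstein
      have expand : kw a * kw e = (kw a + kw e + E F * kw a * kw e) * kw e
          - kw e * kw e - E F * kw a * (kw e * kw e) := by noncomm_ring
      rw [expand, hstein, sq_zero, mul_zero]
      simp
  by_cases hv : v = 0
  · have hu : u ≠ 0 := by
      intro hu
      apply d.ne_zero
      rw [hd, hu, hv]
      ring
    have hdu : d = Units.mk0 u hu * Units.mk0 u hu := Units.ext (by
      rw [Units.val_mul, Units.val_mk0, hd, hv]
      ring)
    rw [hdu, kwsq, mul_zero]
  · set sv : Fˣ := Units.mk0 v hv with hsvdef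
    have hfact : (d : F) = v ^ 2 * ((u / v) ^ 2 + (a : F)) := by
      rw [hd]
      field_simp
    have hne : (u / v) ^ 2 + (a : F) ≠ 0 := by
      intro hz
      exact d.ne_zero (by rw [hfact, hz, mul_zero])
    set e : Fˣ := Units.mk0 ((u / v) ^ 2 + (a : F)) hne with hedef
    have hde : d = sv * sv * e := Units.ext (by
      rw [Units.val_mul, Units.val_mul, hsvdef, hedef]
      simp only [Units.val_mk0]
      rw [hfact]
      ring)
    rw [hde, kw_sq_mul]
    exact main e (u / v) (by rw [hedef, Units.val_mk0])

omit [CharP F 2] in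
lemma shuffle (u : Fˣ) (y z : KW F) : kw u * (E F * y * z) = E F * (kw u * y) * z := by
  calc kw u * (E F * y * z) = (kw u * E F) * (y * z) := by noncomm_ring
    _ = (E F * kw u) * (y * z) := by rw [← kw_eta_comm]
    _ = E F * (kw u * y) * z := by noncomm_ring

lemma part1 (a b : Fˣ) : kw a * kw b = kw a * kw (a * b) := by
  have h1 : kw a * kw (a * b) =
      kw a * kw a + kw a * kw b + kw a * (E F * kw a * kw b) := by
    rw [kw_mul]; noncomm_ring
  have h2 : kw a * (E F * kw a * kw b) = E F * (kw a * kw a) * kw b := shuffle a _ _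
  rw [h1, h2, sq_zero, mul_zero, zero_mul, zero_add, add_zero]

lemma part2 (a b c : Fˣ) (u v : F) (h : (c : F) = u ^ 2 + v ^ 2 * (a : F)) :
    kw a * kw b = kw a * kw (b * c) := by
  have hac : kw a * kw c = 0 := key a c u v h
  have h1 : kw a * kw (b * c) =
      kw a * kw b + kw a * kw c + kw a * (E F * kw b * kw c) := by
    rw [kw_mul]; noncomm_ring
  have h2 : kw a * (E F * kw b * kw c) = 0 := by
    calc kw a * (E F * kw b * kw c) = kw a * (E F * (kw b * kw c)) := by noncomm_ring
      _ = kw a * (E F * (kw c * kw b)) := by rw [eta_swap]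
      _ = kw a * (E F * kw c * kw b) := by noncomm_ring
      _ = E F * (kw a * kw c) * kw b := shuffle a _ _
      _ = 0 := by rw [hac, mul_zero, zero_mul]
  rw [h1, h2, hac, add_zero, add_zero]

lemma part3 (a b c : Fˣ) (u v : F) (h : (c : F) = u ^ 2 * (a : F) + v ^ 2 * (b : F)) :
    kw a * kw b = kw (a * b) * kw c := by
  have hbne : (b : F) ≠ 0 := b.ne_zero
  have h1 : kw (a * b) * kw c = kw (a * b) * kw (c * (c * b⁻¹)) := by
    apply part2 (a * b) c (c * b⁻¹) v (u * (b : F)⁻¹)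
    rw [Units.val_mul, Units.val_inv_eq_inv_val, Units.val_mul]
    field_simp
    linear_combination h
  have h2 : kw (c * (c * b⁻¹)) = kw b := by
    rw [← mul_assoc, kw_sq_mul, kw_inv]
  have h3 : kw (a * b) * kw b =
      kw a * kw b + kw b * kw b + E F * kw a * (kw b * kw b) := by
    rw [kw_mul]; noncomm_ring
  rw [h1, h2, h3, sq_zero, mul_zero, add_zero, add_zero]

end Char2

end StmtAux

theorem stmt18 (F : Type) [Field F] [CharP F 2] (a b c : Fˣ) :
    (kw a * kw b = kw a * kw (a * b)) ∧
    ((∃ u v : F, (c : F) = u ^ 2 + v ^ 2 * a) → kw a * kw b = kw a * kw (b * c)) ∧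
    ((∃ u v : F, (c : F) = u ^ 2 * a + v ^ 2 * b) → kw a * kw b = kw (a * b) * kw c) := by
  refine ⟨StmtAux.part1 a b, fun ⟨u, v, h⟩ => StmtAux.part2 a b c u v h,
    fun ⟨u, v, h⟩ => StmtAux.part3 a b c u v h⟩
end
end
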